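/- arXiv:2003.04861 — 3 statements merged into one kernel-verified Lean document; each statement's English description precedes it below -/
import Mathlib

section
/- Let μ be a probability measure on ℝ with characteristic function φ(t) = ∫ e^{itx} dμ(x) and cumulative distribution function F(x) = μ((−∞, x]). Then for every x ∈ ℝ at which F is continuous, F(x) = 1/2 − (1/π) · lim_{T→∞} ∫_{1/T}^{T} Im(e^{−itx} φ(t))/t dt, i.e. the function T ↦ ∫_{t ∈ [1/T, T]} Im(e^{−itx} φ(t))/t dt tends to π(1/2 − F(x)) as T → ∞. -/
/-!
Since `Im (e^{-itx} φ t) = ∫ sin ((y - x) t) dμ(y)`, Fubini on `[1/T, T] × ℝ` turns the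
truncated integral into `∫ (Si ((y - x) T) - Si ((y - x) / T)) dμ(y)`, where `Si` is the sine
integral. Writing `1 / t = ∫₀^∞ e^{-st} ds` and applying Fubini once more gives Dirichlet's
limit `Si T → π / 2` with error at most `2 / T`; in particular `Si` is bounded. Dominated
convergence then yields the limit `(π / 2) ∫ sign (y - x) dμ(y)`, which is `π (1/2 - F x)`
because continuity of `F` at `x` means that `μ` has no atom at `x`.
-/

open MeasureTheory Filter Real Set Topology ProbabilityTheory

lemma integral_exp_neg_mul_sin (s T : ℝ) :
    ∫ t in (0:ℝ)..T, exp (-s * t) * sin t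
      = (1 - exp (-s * T) * (s * sin T + cos T)) / (1 + s ^ 2) := by
  have hs : (1 : ℝ) + s ^ 2 ≠ 0 := by positivity
  have hderiv (t : ℝ) :
      HasDerivAt (fun t => -(exp (-s * t) * (s * sin t + cos t)) / (1 + s ^ 2))
        (exp (-s * t) * sin t) t := by
    have h := ((((hasDerivAt_id t).const_mul (-s)).exp).mul
      (((hasDerivAt_sin t).const_mul s).add (hasDerivAt_cos t))).neg.div_const (1 + s ^ 2)
    refine h.congr_deriv ?_
    simp only [id, Pi.add_apply]
    field_simp
    ring
  rw [intervalIntegral.integral_eq_sub_of_hasDerivAt (fun t _ => hderiv t)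
    (by apply Continuous.intervalIntegrable; fun_prop)]
  simp only [mul_zero, exp_zero, sin_zero, cos_zero]
  ring

lemma integral_exp_neg_mul_Ioi_zero {t : ℝ} (ht : 0 < t) :
    ∫ s in Ioi (0:ℝ), exp (-s * t) = t⁻¹ := by
  simp_rw [neg_mul, mul_comm _ t, ← neg_mul]
  rw [integral_exp_mul_Ioi (neg_neg_of_pos ht), mul_zero, exp_zero, div_neg, neg_div, neg_neg,
    one_div]

noncomputable def sineIntegral (T : ℝ) : ℝ := ∫ t in (0:ℝ)..T, sinc t

lemma integrable_exp_neg_mul_mul_sin_prod (T : ℝ) :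
    Integrable (fun p : ℝ × ℝ => exp (-p.2 * p.1) * sin p.1)
      ((volume.restrict (Ioc 0 T)).prod (volume.restrict (Ioi 0))) := by
  have hmeas : AEStronglyMeasurable (fun p : ℝ × ℝ => exp (-p.2 * p.1) * sin p.1)
      ((volume.restrict (Ioc 0 T)).prod (volume.restrict (Ioi 0))) :=
    (by fun_prop : Continuous fun p : ℝ × ℝ => exp (-p.2 * p.1) * sin p.1).aestronglyMeasurable
  rw [integrable_prod_iff hmeas]
  refine ⟨?_, (integrable_const 1).mono' hmeas.norm.integral_prod_right' ?_⟩
  all_goals filter_upwards [ae_restrict_mem measurableSet_Ioc] with t ht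
  · simp_rw [neg_mul, mul_comm _ t, ← neg_mul]
    exact (integrableOn_exp_mul_Ioi (neg_neg_of_pos ht.1) 0).mul_const _
  · simp_rw [norm_mul, norm_eq_abs, abs_exp]
    rw [integral_mul_const, integral_exp_neg_mul_Ioi_zero ht.1,
      abs_of_nonneg (mul_nonneg (inv_nonneg.2 ht.1.le) (abs_nonneg _)), inv_mul_le_one₀ ht.1]
    exact abs_sin_le_abs.trans (abs_of_pos ht.1).le

lemma sineIntegral_eq_integral_Ioi {T : ℝ} (hT : 0 ≤ T) :
    sineIntegral T = ∫ s in Ioi 0, (1 - exp (-s * T) * (s * sin T + cos T)) / (1 + s ^ 2) := by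
  have hsinc : ∀ t ∈ Ioc (0:ℝ) T, sinc t = ∫ s in Ioi 0, exp (-s * t) * sin t := by
    rintro t ⟨ht, -⟩
    rw [integral_mul_const, integral_exp_neg_mul_Ioi_zero ht, sinc_of_ne_zero ht.ne',
      inv_mul_eq_div]
  rw [sineIntegral, intervalIntegral.integral_of_le hT,
    setIntegral_congr_fun measurableSet_Ioc hsinc,
    integral_integral_swap (integrable_exp_neg_mul_mul_sin_prod T)]
  refine setIntegral_congr_fun measurableSet_Ioi fun s _ => ?_
  rw [← intervalIntegral.integral_of_le hT, integral_exp_neg_mul_sin]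

lemma abs_exp_neg_mul_mul_div_one_add_sq_le {s : ℝ} (hs : 0 ≤ s) (T : ℝ) :
    |exp (-s * T) * (s * sin T + cos T) / (1 + s ^ 2)| ≤ 2 * exp (-s * T) := by
  have hpos : (0:ℝ) < 1 + s ^ 2 := by positivity
  have htrig : |s * sin T + cos T| ≤ s + 1 := by
    calc |s * sin T + cos T| ≤ s * |sin T| + |cos T| := by
          simpa [abs_mul, abs_of_nonneg hs] using abs_add_le (s * sin T) (cos T)
      _ ≤ s + 1 := by gcongr <;> [exact mul_le_of_le_one_right hs (abs_sin_le_one T);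
          exact abs_cos_le_one T]
  rw [abs_div, abs_mul, abs_exp, abs_of_pos hpos, div_le_iff₀ hpos]
  calc exp (-s * T) * |s * sin T + cos T| ≤ exp (-s * T) * (2 * (1 + s ^ 2)) := by
        gcongr
        nlinarith [sq_nonneg (s - 1)]
    _ = 2 * exp (-s * T) * (1 + s ^ 2) := by ring

lemma abs_sineIntegral_sub_pi_div_two_le {T : ℝ} (hT : 0 < T) :
    |sineIntegral T - π / 2| ≤ 2 / T := by
  set e : ℝ → ℝ := fun s => exp (-s * T) * (s * sin T + cos T) / (1 + s ^ 2)
  have hbound : ∀ᵐ s ∂volume.restrict (Ioi (0:ℝ)), ‖e s‖ ≤ 2 * exp (-s * T) :=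
    (ae_restrict_iff' measurableSet_Ioi).2 <| ae_of_all _ fun s hs =>
      abs_exp_neg_mul_mul_div_one_add_sq_le (le_of_lt hs) T
  have hdom : IntegrableOn (fun s => 2 * exp (-s * T)) (Ioi 0) := by
    simp_rw [neg_mul, mul_comm _ T, ← neg_mul]
    exact (integrableOn_exp_mul_Ioi (neg_neg_of_pos hT) 0).const_mul 2
  have hsplit : sineIntegral T - π / 2 = -∫ s in Ioi 0, e s := by
    rw [sineIntegral_eq_integral_Ioi hT.le]
    simp_rw [sub_div, one_div]
    rw [integral_sub integrable_inv_one_add_sq.integrableOn (hdom.mono' (by fun_prop) hbound),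
      integral_Ioi_inv_one_add_sq, arctan_zero, sub_zero]
    ring
  calc |sineIntegral T - π / 2| = ‖∫ s in Ioi 0, e s‖ := by rw [hsplit, abs_neg, norm_eq_abs]
    _ ≤ ∫ s in Ioi 0, 2 * exp (-s * T) := norm_integral_le_of_norm_le hdom hbound
    _ = 2 / T := by rw [integral_const_mul, integral_exp_neg_mul_Ioi_zero hT, div_eq_mul_inv]

lemma tendsto_sineIntegral_atTop : Tendsto sineIntegral atTop (𝓝 (π / 2)) := by
  refine tendsto_iff_norm_sub_tendsto_zero.2 <|
    squeeze_zero' (Eventually.of_forall fun _ => norm_nonneg _) ?_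
      ((tendsto_const_nhds (x := (2:ℝ))).div_atTop tendsto_id)
  filter_upwards [eventually_gt_atTop 0] with T hT
  exact abs_sineIntegral_sub_pi_div_two_le hT

lemma continuous_sineIntegral : Continuous sineIntegral :=
  intervalIntegral.continuous_primitive (fun _ _ => continuous_sinc.intervalIntegrable _ _) 0

lemma sineIntegral_neg (T : ℝ) : sineIntegral (-T) = -sineIntegral T := by
  have h := intervalIntegral.integral_comp_neg (a := 0) (b := T) sinc
  simp only [sinc_neg, neg_zero] at h
  rw [sineIntegral, sineIntegral, h, intervalIntegral.integral_symm]

lemma abs_sineIntegral_le (T : ℝ) : |sineIntegral T| ≤ π / 2 + 2 := by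
  wlog hT : 0 ≤ T generalizing T
  · simpa [sineIntegral_neg] using this (-T) (by linarith)
  rcases le_or_gt T 1 with hT1 | hT1
  · have h := intervalIntegral.norm_integral_le_of_norm_le_const (a := 0) (b := T) (C := 1)
      (f := sinc) fun t _ => abs_sinc_le_one t
    rw [norm_eq_abs, sub_zero, one_mul, abs_of_nonneg hT] at h
    exact h.trans (by linarith [pi_pos])
  · have h := abs_sub_abs_le_abs_sub (sineIntegral T) (π / 2)
    rw [abs_of_pos (by positivity : 0 < π / 2)] at h
    linarith [abs_sineIntegral_sub_pi_div_two_le (T := T) (by linarith),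
      div_le_self zero_le_two hT1.le]

lemma tendsto_sineIntegral_mul_atTop (a : ℝ) :
    Tendsto (fun T => sineIntegral (a * T)) atTop (𝓝 (π / 2 * Real.sign a)) := by
  rcases lt_trichotomy a 0 with ha | rfl | ha
  · rw [Real.sign_of_neg ha, mul_neg_one]
    have h (T : ℝ) : sineIntegral (a * T) = -sineIntegral (-a * T) := by
      rw [neg_mul, sineIntegral_neg, neg_neg]
    simp_rw [h]
    exact (tendsto_sineIntegral_atTop.comp (tendsto_id.const_mul_atTop (neg_pos.2 ha))).neg
  · simp [sineIntegral]
  · rw [Real.sign_of_pos ha, mul_one]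
    exact tendsto_sineIntegral_atTop.comp (tendsto_id.const_mul_atTop ha)

lemma integral_sin_mul_div_eq_sineIntegral_sub {u v : ℝ} (hu : 0 < u) (hv : 0 < v) (a : ℝ) :
    ∫ t in u..v, sin (a * t) / t = sineIntegral (a * v) - sineIntegral (a * u) := by
  have hsinc : EqOn (fun t => sin (a * t) / t) (fun t => a * sinc (a * t)) (uIcc u v) := by
    intro t ht
    have ht0 : t ≠ 0 := (lt_min hu hv |>.trans_le ht.1).ne'
    rcases eq_or_ne a 0 with rfl | ha
    · simp
    · simp only [sinc_of_ne_zero (mul_ne_zero ha ht0)]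
      field_simp
  rw [intervalIntegral.integral_congr hsinc, intervalIntegral.integral_const_mul,
    intervalIntegral.mul_integral_comp_mul_left, sineIntegral, sineIntegral,
    intervalIntegral.integral_interval_sub_left (continuous_sinc.intervalIntegrable _ _)
      (continuous_sinc.intervalIntegrable _ _)]

lemma im_cexp_neg_mul_integral_cexp (μ : Measure ℝ) [IsFiniteMeasure μ] (t x : ℝ) :
    (Complex.exp (-(Complex.I * t * x)) * ∫ y, Complex.exp (Complex.I * t * y) ∂μ).im
      = ∫ y, sin ((y - x) * t) ∂μ := by
  have hexp (y : ℝ) : Complex.exp (-(Complex.I * t * x)) * Complex.exp (Complex.I * t * y)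
      = Complex.exp (((y - x) * t : ℝ) * Complex.I) := by
    rw [← Complex.exp_add]
    push_cast
    ring_nf
  have hint : Integrable (fun y : ℝ => Complex.exp (((y - x) * t : ℝ) * Complex.I)) μ :=
    (integrable_const (1 : ℝ)).mono' (by fun_prop)
      (ae_of_all _ fun y => (Complex.norm_exp_ofReal_mul_I _).le)
  rw [← integral_const_mul]
  simp_rw [hexp]
  rw [← RCLike.im_to_complex, ← integral_im hint]
  exact integral_congr_ae (ae_of_all _ fun y => Complex.exp_ofReal_mul_I_im _)

lemma integral_Icc_im_div_eq_integral_sineIntegral_sub (μ : Measure ℝ) [IsFiniteMeasure μ]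
    (x : ℝ) {u v : ℝ} (hu : 0 < u) (huv : u ≤ v) :
    ∫ t in Icc u v,
        (Complex.exp (-(Complex.I * t * x)) * ∫ y, Complex.exp (Complex.I * t * y) ∂μ).im / t
      = ∫ y, (sineIntegral ((y - x) * v) - sineIntegral ((y - x) * u)) ∂μ := by
  have hbound : ∀ᵐ p ∂(volume.restrict (Ioc u v)).prod μ,
      ‖sin ((p.2 - x) * p.1) / p.1‖ ≤ u⁻¹ := by
    filter_upwards [Measure.quasiMeasurePreserving_fst.ae (ae_restrict_mem measurableSet_Ioc)]
      with p hp
    have hp0 : 0 < p.1 := hu.trans hp.1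
    rw [norm_div, norm_eq_abs, norm_of_nonneg hp0.le, div_le_iff₀ hp0]
    calc |sin ((p.2 - x) * p.1)| ≤ 1 := abs_sin_le_one _
      _ ≤ u⁻¹ * p.1 := by rw [le_inv_mul_iff₀ hu, mul_one]; exact hp.1.le
  have hint : Integrable (fun p : ℝ × ℝ => sin ((p.2 - x) * p.1) / p.1)
      ((volume.restrict (Ioc u v)).prod μ) :=
    (integrable_const u⁻¹).mono' (by fun_prop : Measurable _).aestronglyMeasurable hbound
  have him : ∀ t ∈ Ioc u v,
      (Complex.exp (-(Complex.I * t * x)) * ∫ y, Complex.exp (Complex.I * t * y) ∂μ).im / t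
        = ∫ y, sin ((y - x) * t) / t ∂μ := fun t _ => by
    rw [im_cexp_neg_mul_integral_cexp, integral_div]
  rw [integral_Icc_eq_integral_Ioc, setIntegral_congr_fun measurableSet_Ioc him,
    integral_integral_swap hint]
  refine integral_congr_ae (ae_of_all _ fun y => ?_)
  dsimp only
  rw [← intervalIntegral.integral_of_le huv,
    integral_sin_mul_div_eq_sineIntegral_sub hu (hu.trans_le huv)]

lemma measure_singleton_eq_zero_of_continuousAt_cdf (μ : Measure ℝ) [IsProbabilityMeasure μ]
    {x : ℝ} (h : ContinuousAt (cdf μ) x) : μ {x} = 0 := by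
  rw [← measure_cdf μ, StieltjesFunction.measure_singleton, h.continuousWithinAt.leftLim_eq,
    sub_self, ENNReal.ofReal_zero]

lemma integral_sign_sub_eq_one_sub_two_mul_cdf (μ : Measure ℝ) [IsProbabilityMeasure μ]
    {x : ℝ} (hx : μ {x} = 0) : ∫ y, Real.sign (y - x) ∂μ = 1 - 2 * cdf μ x := by
  have h : (fun y => Real.sign (y - x)) =ᵐ[μ] fun y => 1 - 2 * (Iic x).indicator 1 y := by
    filter_upwards [measure_eq_zero_iff_ae_notMem.1 hx] with y hy
    rcases lt_or_gt_of_ne hy with hyx | hyx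
    · norm_num [Real.sign_of_neg (sub_neg.2 hyx), hyx.le]
    · simp [Real.sign_of_pos (sub_pos.2 hyx), not_le.2 hyx]
  rw [integral_congr_ae h, integral_sub (integrable_const 1)
    (((integrable_const 1).indicator measurableSet_Iic).const_mul 2), integral_const_mul,
    integral_indicator_one measurableSet_Iic, cdf_eq_real]
  simp

lemma tendsto_integral_sineIntegral_sub (μ : Measure ℝ) [IsFiniteMeasure μ] (x : ℝ) :
    Tendsto
      (fun T => ∫ y, (sineIntegral ((y - x) * T) - sineIntegral ((y - x) * (1 / T))) ∂μ)
      atTop (𝓝 (π / 2 * ∫ y, Real.sign (y - x) ∂μ)) := by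
  rw [← integral_const_mul]
  refine tendsto_integral_filter_of_dominated_convergence (fun _ => π + 4)
    (Eventually.of_forall fun T => Continuous.aestronglyMeasurable ?_)
    (Eventually.of_forall fun T => ae_of_all _ fun y => ?_) (integrable_const _)
    (ae_of_all _ fun y => ?_)
  · exact (continuous_sineIntegral.comp (by fun_prop)).sub
      (continuous_sineIntegral.comp (by fun_prop))
  · rw [norm_eq_abs]
    linarith [abs_sub (sineIntegral ((y - x) * T)) (sineIntegral ((y - x) * (1 / T))),
      abs_sineIntegral_le ((y - x) * T), abs_sineIntegral_le ((y - x) * (1 / T))]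
  · have hzero : Tendsto (fun T : ℝ => (y - x) * (1 / T)) atTop (𝓝 0) := by
      simpa using tendsto_inv_atTop_zero.const_mul (y - x)
    have h0 := (continuous_sineIntegral.tendsto 0).comp hzero
    rw [Function.comp_def, show sineIntegral 0 = 0 by simp [sineIntegral]] at h0
    simpa using (tendsto_sineIntegral_mul_atTop (y - x)).sub h0

/-- Gil-Pelaez inversion theorem: for a probability measure on ℝ with characteristic
function φ and cumulative distribution function F, at every continuity point x of F,
`F x = 1/2 - (1/π) · lim_{T→∞} ∫_{1/T}^{T} Im(e^{-itx} φ(t))/t dt`, i.e. the truncated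
integral tends to `π (1/2 - F x)`. -/
theorem gil_pelaez_inversion
    (μ : Measure ℝ) [IsProbabilityMeasure μ]
    (φ : ℝ → ℂ) (hφ : ∀ t : ℝ, φ t = ∫ x : ℝ, Complex.exp (Complex.I * t * x) ∂μ)
    (F : ℝ → ℝ) (hF : ∀ x : ℝ, F x = (μ (Iic x)).toReal)
    (x : ℝ) (hcont : ContinuousAt F x) :
    Tendsto (fun T : ℝ => ∫ t in Icc (1 / T) T,
        (Complex.exp (-(Complex.I * t * x)) * φ t).im / t)
      atTop (nhds (π * (1 / 2 - F x))) := by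
  obtain rfl : F = cdf μ := funext fun y => by rw [hF, cdf_eq_real, measureReal_def]
  have hatom := measure_singleton_eq_zero_of_continuousAt_cdf μ hcont
  have hlim := tendsto_integral_sineIntegral_sub μ x
  rw [integral_sign_sub_eq_one_sub_two_mul_cdf μ hatom,
    show π / 2 * (1 - 2 * cdf μ x) = π * (1 / 2 - cdf μ x) by ring] at hlim
  refine hlim.congr' ?_
  filter_upwards [eventually_ge_atTop 1] with T hT
  simp only [hφ]
  exact (integral_Icc_im_div_eq_integral_sineIntegral_sub μ x (by positivity)
    ((div_le_one_of_le₀ hT (by positivity)).trans hT)).symm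
end

section
/- Let (Ω, P) be a probability space, w : Ω → ℝ^m a random vector, and x̄(ω) = a + G w(ω) for fixed a ∈ ℝ^n and G ∈ ℝ^{n×m}. Let S = {x ∈ ℝ^n : pᵢᵀx ≤ qᵢ, i = 1, …, l}. For each i let Fᵢ(y) = P{ω : pᵢᵀ G w(ω) ≤ y} be the cumulative distribution function of pᵢᵀGw, and suppose there are affine coefficients a_{i,r}, c_{i,r} ∈ ℝ (r = 1, …, zᵢ) and a threshold x^{lb}_i ∈ ℝ such that min_{r} (a_{i,r}·y + c_{i,r}) ≤ Fᵢ(y) for every y ≥ x^{lb}_i. Suppose δ₁, …, δ_l ≥ 0 with Σᵢ δᵢ ≤ Δ for some Δ ∈ [0, 1], and that for every i: (i) qᵢ − pᵢᵀa ≥ x^{lb}_i, and (ii) a_{i,r}·(qᵢ − pᵢᵀa) + c_{i,r} ≥ 1 − δᵢ for every r = 1, …, zᵢ. Then P{ω : x̄(ω) ∉ S} ≤ Δ. -/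
open MeasureTheory Matrix

/-- Feasibility guarantee of the convex conic reformulation (problem 12 of the paper):
if for each constraint `i` the piecewise-affine function `y ↦ min_r (a_{i,r} y + c_{i,r})`
under-approximates the CDF `Fᵢ` of `pᵢᵀGw` on `[x^{lb}_i, ∞)`, and the conic constraints
`qᵢ - pᵢᵀa ≥ x^{lb}_i` and `a_{i,r}(qᵢ - pᵢᵀa) + c_{i,r} ≥ 1 - δᵢ` hold with
`Σᵢ δᵢ ≤ Δ`, then the joint chance constraint `P{x̄ ∉ S} ≤ Δ` is satisfied. -/
theorem conic_reformulation_feasibility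
    {Ω : Type*} [MeasurableSpace Ω] (P : Measure Ω) [IsProbabilityMeasure P]
    {n m l : ℕ} (w : Ω → Fin m → ℝ) (hmeas : Measurable w)
    (av : Fin n → ℝ) (G : Matrix (Fin n) (Fin m) ℝ)
    (xbar : Ω → Fin n → ℝ) (hxbar : ∀ ω, xbar ω = av + G.mulVec (w ω))
    (p : Fin l → Fin n → ℝ) (q : Fin l → ℝ)
    (S : Set (Fin n → ℝ)) (hS : S = {x | ∀ i, p i ⬝ᵥ x ≤ q i})
    (F : Fin l → ℝ → ℝ)
    (hF : ∀ i, ∀ y : ℝ, F i y = (P {ω | p i ⬝ᵥ G.mulVec (w ω) ≤ y}).toReal)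
    (z : Fin l → ℕ) (hz : ∀ i, 0 < z i)
    (a : ∀ i : Fin l, Fin (z i) → ℝ) (c : ∀ i : Fin l, Fin (z i) → ℝ)
    (xlb : Fin l → ℝ)
    (hunder : ∀ i, ∀ y : ℝ, xlb i ≤ y →
      (⨅ r : Fin (z i), (a i r * y + c i r)) ≤ F i y)
    (δ : Fin l → ℝ) (hδ : ∀ i, 0 ≤ δ i)
    (Δ : ℝ) (hΔ0 : 0 ≤ Δ) (hΔ1 : Δ ≤ 1) (hsum : ∑ i, δ i ≤ Δ)
    (hres : ∀ i, q i - p i ⬝ᵥ av ≥ xlb i)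
    (hcone : ∀ i, ∀ r : Fin (z i), a i r * (q i - p i ⬝ᵥ av) + c i r ≥ 1 - δ i) :
    P {ω | xbar ω ∉ S} ≤ ENNReal.ofReal Δ := by
  classical
  set y : Fin l → ℝ := fun i => q i - p i ⬝ᵥ av with hy
  have hmeasf : ∀ i, Measurable (fun ω => p i ⬝ᵥ G.mulVec (w ω)) := by
    intro i
    have : (fun ω => p i ⬝ᵥ G.mulVec (w ω))
        = fun ω => ∑ k, (Matrix.vecMul (p i) G) k * w ω k := by
      funext ω
      rw [Matrix.dotProduct_mulVec]
      rfl
    rw [this]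
    exact Finset.measurable_sum _ fun k _ =>
      (measurable_const.mul ((measurable_pi_apply k).comp hmeas))
  set B : Fin l → Set Ω := fun i => {ω | p i ⬝ᵥ G.mulVec (w ω) ≤ y i} with hB
  have hBmeas : ∀ i, MeasurableSet (B i) := fun i =>
    measurableSet_le (hmeasf i) measurable_const
  have hFB : ∀ i, 1 - δ i ≤ (P (B i)).toReal := by
    intro i
    have h1 : (1 : ℝ) - δ i ≤ ⨅ r : Fin (z i), (a i r * y i + c i r) := by
      have : Nonempty (Fin (z i)) := Fin.pos_iff_nonempty.mp (hz i)
      exact le_ciInf fun r => hcone i r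
    have h2 := hunder i (y i) (hres i)
    have := h1.trans h2
    rwa [hF i (y i)] at this
  have hA : ∀ i, P ((B i)ᶜ) ≤ ENNReal.ofReal (δ i) := by
    intro i
    have hne : P (B i) ≠ ⊤ := measure_ne_top P _
    have hcompl : P ((B i)ᶜ) = 1 - P (B i) :=
      prob_compl_eq_one_sub (hBmeas i)
    have htr : (P ((B i)ᶜ)).toReal ≤ δ i := by
      rw [hcompl, ENNReal.toReal_sub_of_le prob_le_one (by simp)]
      simp only [ENNReal.toReal_one]
      linarith [hFB i]
    calc P ((B i)ᶜ) = ENNReal.ofReal ((P ((B i)ᶜ)).toReal) := by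
          rw [ENNReal.ofReal_toReal (measure_ne_top P _)]
      _ ≤ ENNReal.ofReal (δ i) := ENNReal.ofReal_le_ofReal htr
  have hsub : {ω | xbar ω ∉ S} ⊆ ⋃ i, (B i)ᶜ := by
    intro ω hω
    simp only [Set.mem_setOf_eq, hS, hxbar ω, Set.mem_setOf_eq, not_forall] at hω
    obtain ⟨i, hi⟩ := hω
    refine Set.mem_iUnion.mpr ⟨i, ?_⟩
    simp only [hB, Set.mem_compl_iff, Set.mem_setOf_eq, not_le, hy]
    rw [dotProduct_add] at hi
    push_neg at hi
    linarith
  calc P {ω | xbar ω ∉ S} ≤ P (⋃ i, (B i)ᶜ) := measure_mono hsub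
    _ ≤ ∑ i, P ((B i)ᶜ) := measure_iUnion_fintype_le _ _
    _ ≤ ∑ i, ENNReal.ofReal (δ i) := Finset.sum_le_sum fun i _ => hA i
    _ = ENNReal.ofReal (∑ i, δ i) := by
        rw [← ENNReal.ofReal_sum_of_nonneg fun i _ => hδ i]
    _ ≤ ENNReal.ofReal Δ := ENNReal.ofReal_le_ofReal hsum
end

section
/- Let f : [a, b] → ℝ be a continuous concave function on a compact interval with a < b, and let ε > 0. Then there exist finitely many points a = x₀ < x₁ < … < x_z = b such that the piecewise-affine function g(x) = min_{1 ≤ k ≤ z} L_k(x), where L_k is the secant (chord) line through (x_{k−1}, f(x_{k−1})) and (x_k, f(x_k)), satisfies 0 ≤ f(x) − g(x) ≤ ε for every x ∈ [a, b]. -/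
/-!
Concavity makes the slope `slope f p ·` antitone, so the secant line through `(p, f p)` and
`(q, f q)` lies below `f` on `[p, q]` and above `f` outside it. Hence the minimum of the secants
is at most `f`, attained by the cell containing `t`, and every secant is at least `f t - ε`:
outside its cell it dominates `f`, while on its cell it is a convex combination of `f p` and
`f q`, both within `ε` of `f t` once the mesh is below a modulus of uniform continuity.
-/

open Set

section Secant

variable {𝕜 : Type*} [Field 𝕜] {s : Set 𝕜} {f : 𝕜 → 𝕜} {p q t : 𝕜}

def secantLine (f : 𝕜 → 𝕜) (p q t : 𝕜) : 𝕜 :=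
  f p + (f q - f p) / (q - p) * (t - p)

theorem sub_secantLine (f : 𝕜 → 𝕜) (p q t : 𝕜) :
    f t - secantLine f p q t = (slope f p t - slope f p q) * (t - p) := by
  rcases eq_or_ne t p with rfl | htp
  · simp [secantLine]
  · rw [secantLine, slope_def_field, slope_def_field]
    field_simp [sub_ne_zero.mpr htp]
    ring

variable [LinearOrder 𝕜] [IsStrictOrderedRing 𝕜]

theorem min_le_secantLine (f : 𝕜 → 𝕜) (hpt : p ≤ t) (htq : t ≤ q) :
    min (f p) (f q) ≤ secantLine f p q t := by
  have hμ₀ : 0 ≤ (t - p) / (q - p) := div_nonneg (by linarith) (by linarith)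
  have hμ₁ : (t - p) / (q - p) ≤ 1 := div_le_one_of_le₀ (by linarith) (by linarith)
  rw [secantLine, div_mul_eq_mul_div, mul_div_assoc]
  rcases le_total (f p) (f q) with h | h
  · rw [min_eq_left h]; nlinarith
  · rw [min_eq_right h]; nlinarith

theorem ConcaveOn.secantLine_le (hf : ConcaveOn 𝕜 s f) (hp : p ∈ s) (hq : q ∈ s) (ht : t ∈ s)
    (hpt : p ≤ t) (htq : t ≤ q) : secantLine f p q t ≤ f t := by
  rcases hpt.eq_or_lt with rfl | hpt
  · simp [secantLine]
  have hslope : slope f p q ≤ slope f p t :=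
    hf.slope_anti hp ⟨ht, hpt.ne'⟩ ⟨hq, (hpt.trans_le htq).ne'⟩ htq
  have := sub_secantLine f p q t
  nlinarith

theorem ConcaveOn.le_secantLine (hf : ConcaveOn 𝕜 s f) (hp : p ∈ s) (hq : q ∈ s) (ht : t ∈ s)
    (hpq : p < q) (hout : t ≤ p ∨ q ≤ t) : f t ≤ secantLine f p q t := by
  have hsub := sub_secantLine f p q t
  rcases hout with htp | hqt
  · rcases htp.eq_or_lt with rfl | htp
    · simp [secantLine]
    have hslope : slope f p q ≤ slope f p t :=
      hf.slope_anti hp ⟨ht, htp.ne⟩ ⟨hq, hpq.ne'⟩ (htp.le.trans hpq.le)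
    nlinarith
  · have hslope : slope f p t ≤ slope f p q :=
      hf.slope_anti hp ⟨hq, hpq.ne'⟩ ⟨ht, (hpq.trans_le hqt).ne'⟩ hqt
    nlinarith

theorem ConcaveOn.sub_le_secantLine {ε : 𝕜} (hf : ConcaveOn 𝕜 s f) (hp : p ∈ s) (hq : q ∈ s)
    (ht : t ∈ s) (hpq : p < q) (hε : 0 ≤ ε) (hosc : t ∈ Icc p q → f t - ε ≤ min (f p) (f q)) :
    f t - ε ≤ secantLine f p q t := by
  by_cases htI : t ∈ Icc p q
  · exact (hosc htI).trans (min_le_secantLine f htI.1 htI.2)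
  · have hout : t ≤ p ∨ q ≤ t := by
      rw [mem_Icc, not_and_or, not_le, not_le] at htI
      exact htI.imp le_of_lt le_of_lt
    linarith [hf.le_secantLine hp hq ht hpq hout]

end Secant

theorem Fin.exists_castSucc_le_and_le_succ {α : Type*} [LinearOrder α] {n : ℕ} (hn : 0 < n)
    (x : Fin (n + 1) → α) {t : α} (h0 : x 0 ≤ t) (hlast : t ≤ x (Fin.last n)) :
    ∃ k : Fin n, x k.castSucc ≤ t ∧ t ≤ x k.succ := by
  by_contra! h
  have hle : ∀ k : Fin (n + 1), x k ≤ t := by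
    intro k
    induction k using Fin.induction with
    | zero => exact h0
    | succ k ih => exact (h k ih).le
  obtain ⟨m, rfl⟩ := Nat.exists_eq_succ_of_ne_zero hn.ne'
  exact (h (Fin.last m) (hle _)).not_ge (Fin.succ_last m ▸ hlast)

theorem exists_partition_mesh_lt {a b δ : ℝ} (hab : a < b) (hδ : 0 < δ) :
    ∃ z : ℕ, 0 < z ∧ ∃ x : Fin (z + 1) → ℝ, StrictMono x ∧ x 0 = a ∧ x (Fin.last z) = b ∧
      ∀ k : Fin z, x k.succ - x k.castSucc < δ := by
  set z := ⌊(b - a) / δ⌋₊ + 1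
  have hz : (0 : ℝ) < z := by positivity
  have hc : 0 < (b - a) / z := div_pos (by linarith) hz
  have hmesh : (b - a) / z < δ := by
    rw [div_lt_iff₀ hz, ← div_lt_iff₀' hδ]
    exact_mod_cast Nat.lt_floor_add_one ((b - a) / δ)
  refine ⟨z, by positivity, fun k => a + k * ((b - a) / z), fun k l hkl => ?_, by simp, ?_,
    fun k => ?_⟩
  · dsimp only
    gcongr
    exact_mod_cast hkl
  · simp only [Fin.val_last]
    field_simp
    ring
  · simp only [Fin.val_succ, Fin.val_castSucc, Nat.cast_succ]
    linarith

/-- Piecewise-affine secant under-approximation of a concave function (the guarantee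
realized by the sandwich algorithm, equations 10–11 of the paper): a continuous
concave function on a compact interval `[a, b]` admits, for any `ε > 0`, a partition
`a = x₀ < x₁ < … < x_z = b` such that the minimum of the secant lines through
consecutive points `(x_{k-1}, f x_{k-1})`, `(x_k, f x_k)` under-approximates `f` on
`[a, b]` with uniform error at most `ε`. -/
theorem concave_pwa_underapproximation
    (a b : ℝ) (hab : a < b) (f : ℝ → ℝ)
    (hcont : ContinuousOn f (Icc a b)) (hconc : ConcaveOn ℝ (Icc a b) f)
    (ε : ℝ) (hε : 0 < ε) :
    ∃ z : ℕ, 0 < z ∧ ∃ x : Fin (z + 1) → ℝ, StrictMono x ∧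
      x 0 = a ∧ x (Fin.last z) = b ∧
      ∀ t ∈ Icc a b,
        0 ≤ f t - (⨅ k : Fin z, (f (x k.castSucc) +
            (f (x k.succ) - f (x k.castSucc)) / (x k.succ - x k.castSucc) *
              (t - x k.castSucc))) ∧
        f t - (⨅ k : Fin z, (f (x k.castSucc) +
            (f (x k.succ) - f (x k.castSucc)) / (x k.succ - x k.castSucc) *
              (t - x k.castSucc))) ≤ ε := by
  obtain ⟨δ, hδ, hclose⟩ := Metric.uniformContinuousOn_iff.mp
    (isCompact_Icc.uniformContinuousOn_of_continuous hcont) ε hε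
  obtain ⟨z, hz, x, hx, hx0, hxz, hmesh⟩ := exists_partition_mesh_lt hab hδ
  refine ⟨z, hz, x, hx, hx0, hxz, fun t ht => ?_⟩
  have hxI (k : Fin (z + 1)) : x k ∈ Icc a b :=
    ⟨hx0 ▸ hx.monotone (Fin.zero_le k), hxz ▸ hx.monotone (Fin.le_last k)⟩
  have hnear (y : ℝ) (hy : y ∈ Icc a b) (hty : |t - y| < δ) : f t - ε ≤ f y := by
    linarith [(abs_sub_lt_iff.mp (hclose t ht y hy hty)).1]
  change 0 ≤ f t - ⨅ j : Fin z, secantLine f (x j.castSucc) (x j.succ) t ∧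
    f t - ⨅ j : Fin z, secantLine f (x j.castSucc) (x j.succ) t ≤ ε
  constructor
  · obtain ⟨k, hk⟩ := Fin.exists_castSucc_le_and_le_succ hz x (hx0 ▸ ht.1) (hxz ▸ ht.2)
    have hinf : ⨅ j : Fin z, secantLine f (x j.castSucc) (x j.succ) t ≤ f t :=
      (ciInf_le (finite_range _).bddBelow k).trans
        (hconc.secantLine_le (hxI _) (hxI _) ht hk.1 hk.2)
    linarith
  · suffices f t - ε ≤ ⨅ j : Fin z, secantLine f (x j.castSucc) (x j.succ) t by linarith
    have : Nonempty (Fin z) := Fin.pos_iff_nonempty.mp hz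
    refine le_ciInf fun j => hconc.sub_le_secantLine (hxI _) (hxI _) ht
      (hx Fin.castSucc_lt_succ) hε.le fun htj => le_min (hnear _ (hxI _) ?_) (hnear _ (hxI _) ?_)
    all_goals rw [abs_sub_lt_iff]; constructor <;> linarith [hmesh j, htj.1, htj.2]
end
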